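/- arXiv:0911.4727 — 2 statements merged into one kernel-verified Lean document; each statement's English description precedes it below -/
import Mathlib

section
/- Let 1 ≤ ň < N, n̂ := N − ň, and x̌ ∈ X^ň. For a gamble f on X^n̂ let I_{E_x̌}f denote the gamble on X^N = X^ň × X^n̂ mapping (z, y) to f(y) if z = x̌ and to 0 otherwise, and set D⌋x̌ := {f ∈ G(X^n̂) : I_{E_x̌}f ∈ D}. If D is a coherent and exchangeable set of gambles on X^N, then D⌋x̌ is a coherent and exchangeable set of gambles on X^n̂. -/
variable {X : Type*} [Fintype X] [DecidableEq X] [Nonempty X]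

/-- `ex^n(f)`: the uniform average of all permuted versions `π^t f` of `f`,
where `(π^t f)(x) = f(x ∘ π)`. -/
noncomputable def exg {X : Type*} (n : ℕ) (f : (Fin n → X) → ℝ) : (Fin n → X) → ℝ :=
  fun x => (∑ π : Equiv.Perm (Fin n), f (x ∘ π)) / (n.factorial : ℝ)

/-- `W_{A_n}`: the linear span of the gambles `f - π^t f`, which is the kernel of
the projection operator `ex^n`. -/
def WA (X : Type*) (n : ℕ) : Set ((Fin n → X) → ℝ) := {f | exg n f = 0}

/-- A coherent set of desirable gambles on a set of possibilities `Y`. -/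
def Coherent {Y : Type*} (D : Set (Y → ℝ)) : Prop :=
  (0 : Y → ℝ) ∉ D ∧ (∀ f : Y → ℝ, 0 ≤ f → f ≠ 0 → f ∈ D) ∧
  (∀ f ∈ D, ∀ c : ℝ, 0 < c → c • f ∈ D) ∧ ∀ f ∈ D, ∀ g ∈ D, f + g ∈ D

/-- A set of desirable gambles on `X^n` is exchangeable if `W_{A_n} + D ⊆ D`. -/
def Exchangeable (X : Type*) (n : ℕ) (D : Set ((Fin n → X) → ℝ)) : Prop :=
  ∀ f ∈ WA X n, ∀ g ∈ D, f + g ∈ D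

/-- The first `nc` coordinates of a sequence in `X^(nc + nh)`. -/
def firstPart {X : Type*} {nc nh : ℕ} (w : Fin (nc + nh) → X) : Fin nc → X :=
  fun i => w (Fin.castAdd nh i)

/-- The last `nh` coordinates of a sequence in `X^(nc + nh)`. -/
def lastPart {X : Type*} {nc nh : ℕ} (w : Fin (nc + nh) → X) : Fin nh → X :=
  fun j => w (Fin.natAdd nc j)

/-- `I_{E_x̌} f`: the gamble on `X^(nc+nh)` equal to `f` on the last `nh` coordinates
when the first `nc` coordinates coincide with `x̌`, and `0` otherwise. -/
def IEx {X : Type*} [Fintype X] [DecidableEq X] {nc nh : ℕ} (xc : Fin nc → X)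
    (f : (Fin nh → X) → ℝ) : (Fin (nc + nh) → X) → ℝ :=
  fun w => if firstPart w = xc then f (lastPart w) else 0

/-!
`I_{E_x̌}` is an injective linear map that sends nonnegative gambles to nonnegative gambles,
so the preimage of a coherent set under it is coherent. It also maps `W_{A_n̂}` into `W_{A_N}`:
permuting only the last `n̂` coordinates already averages `I_{E_x̌} f` to `I_{E_x̌}` of the
average of `f`, and averaging over all of `S_N` factors through that. Hence exchangeability
pulls back too.
-/

section Pullback

variable {Y Z : Type*}

theorem Coherent.preimage {D : Set (Z → ℝ)} (hD : Coherent D) (T : (Y → ℝ) →ₗ[ℝ] (Z → ℝ))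
    (hT : Function.Injective T) (hT_nonneg : ∀ f, 0 ≤ f → 0 ≤ T f) : Coherent (T ⁻¹' D) := by
  obtain ⟨hzero, hpos, hsmul, hadd⟩ := hD
  refine ⟨?_, fun f hf hf0 => ?_, fun f hf c hc => ?_, fun f hf g hg => ?_⟩
  · simpa using hzero
  · exact hpos _ (hT_nonneg f hf) ((map_ne_zero_iff T hT).mpr hf0)
  · simpa using hsmul _ hf c hc
  · simpa using hadd _ hf _ hg

theorem Exchangeable.preimage {X : Type*} {m n : ℕ} {D : Set ((Fin n → X) → ℝ)}
    (hD : Exchangeable X n D) (T : ((Fin m → X) → ℝ) →ₗ[ℝ] ((Fin n → X) → ℝ))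
    (hT : ∀ f ∈ WA X m, T f ∈ WA X n) : Exchangeable X m (T ⁻¹' D) := by
  intro f hf g hg
  simpa using hD _ (hT f hf) _ hg

end Pullback

theorem mem_WA_iff {α : Type*} {n : ℕ} {f : (Fin n → α) → ℝ} :
    f ∈ WA α n ↔ ∀ x : Fin n → α, ∑ π : Equiv.Perm (Fin n), f (x ∘ π) = 0 := by
  simp [WA, exg, funext_iff, Nat.factorial_ne_zero]

theorem sum_perm_eq_zero_of_sum_comp_eq_zero {α ι β : Type*} [Fintype α] [DecidableEq α]
    [Fintype ι] [Nonempty ι] (σ : ι → Equiv.Perm α) {g : (α → β) → ℝ}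
    (hg : ∀ z, ∑ i, g (z ∘ σ i) = 0) (x : α → β) : ∑ π : Equiv.Perm α, g (x ∘ π) = 0 := by
  have hreindex : ∀ i, ∑ π : Equiv.Perm α, g (x ∘ π ∘ σ i) = ∑ π : Equiv.Perm α, g (x ∘ π) :=
    fun i => Fintype.sum_equiv (Equiv.mulRight (σ i)) _ _ fun _ => rfl
  have hcard : Fintype.card ι • ∑ π : Equiv.Perm α, g (x ∘ π) = 0 := by
    calc Fintype.card ι • ∑ π : Equiv.Perm α, g (x ∘ π)
        = ∑ i, ∑ π : Equiv.Perm α, g (x ∘ π ∘ σ i) := by simp [hreindex]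
      _ = ∑ π : Equiv.Perm α, ∑ i, g ((x ∘ π) ∘ σ i) := Finset.sum_comm
      _ = 0 := Finset.sum_eq_zero fun π _ => hg (x ∘ π)
  exact (smul_eq_zero.mp hcard).resolve_left Fintype.card_ne_zero

section Updating

variable {α : Type*} {nc nh : ℕ}

def Equiv.Perm.extendLeft (β : Equiv.Perm (Fin nh)) : Equiv.Perm (Fin (nc + nh)) :=
  finSumFinEquiv.permCongr (Equiv.sumCongr (Equiv.refl (Fin nc)) β)

theorem firstPart_comp_extendLeft (w : Fin (nc + nh) → α) (β : Equiv.Perm (Fin nh)) :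
    firstPart (w ∘ β.extendLeft (nc := nc)) = firstPart w := by
  funext i
  simp [firstPart, Equiv.Perm.extendLeft, Equiv.permCongr_apply, ← finSumFinEquiv_apply_left]

theorem lastPart_comp_extendLeft (w : Fin (nc + nh) → α) (β : Equiv.Perm (Fin nh)) :
    lastPart (w ∘ β.extendLeft (nc := nc)) = lastPart w ∘ β := by
  funext j
  simp [lastPart, Equiv.Perm.extendLeft, Equiv.permCongr_apply, ← finSumFinEquiv_apply_right]

variable [Fintype α] [DecidableEq α]

def IExₗ (xc : Fin nc → α) : ((Fin nh → α) → ℝ) →ₗ[ℝ] ((Fin (nc + nh) → α) → ℝ) where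
  toFun := IEx xc
  map_add' f g := by
    funext w
    simp only [IEx, Pi.add_apply]
    split_ifs <;> simp
  map_smul' c f := by
    funext w
    simp only [IEx, Pi.smul_apply, smul_eq_mul, RingHom.id_apply]
    split_ifs <;> simp

theorem IExₗ_apply (xc : Fin nc → α) (f : (Fin nh → α) → ℝ) : IExₗ xc f = IEx xc f := rfl

theorem IEx_nonneg (xc : Fin nc → α) {f : (Fin nh → α) → ℝ} (hf : 0 ≤ f) : 0 ≤ IEx xc f := by
  intro w
  unfold IEx
  split_ifs
  exacts [hf _, le_rfl]

theorem IEx_append (xc : Fin nc → α) (f : (Fin nh → α) → ℝ) (y : Fin nh → α) :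
    IEx xc f (Fin.append xc y) = f y := by
  have hfirst : firstPart (Fin.append xc y) = xc := funext fun i => Fin.append_left xc y i
  have hlast : lastPart (Fin.append xc y) = y := funext fun j => Fin.append_right xc y j
  simp [IEx, hfirst, hlast]

theorem IEx_injective (xc : Fin nc → α) : Function.Injective (IEx (nh := nh) xc) :=
  fun f g hfg => funext fun y => by rw [← IEx_append xc f y, ← IEx_append xc g y, hfg]

theorem IEx_comp_extendLeft (xc : Fin nc → α) (f : (Fin nh → α) → ℝ) (β : Equiv.Perm (Fin nh))
    (w : Fin (nc + nh) → α) :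
    IEx xc f (w ∘ β.extendLeft) = IEx xc (fun y => f (y ∘ β)) w := by
  simp only [IEx, firstPart_comp_extendLeft, lastPart_comp_extendLeft]

theorem IEx_mem_WA (xc : Fin nc → α) {f : (Fin nh → α) → ℝ} (hf : f ∈ WA α nh) :
    IEx xc f ∈ WA α (nc + nh) := by
  rw [mem_WA_iff] at hf ⊢
  refine sum_perm_eq_zero_of_sum_comp_eq_zero Equiv.Perm.extendLeft fun w => ?_
  have hsum : ∑ β : Equiv.Perm (Fin nh), (fun y => f (y ∘ β)) = 0 :=
    funext fun y => by simpa using hf y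
  calc ∑ β : Equiv.Perm (Fin nh), IEx xc f (w ∘ β.extendLeft)
      = IExₗ xc (∑ β : Equiv.Perm (Fin nh), fun y => f (y ∘ β)) w := by
        simp [IEx_comp_extendLeft, map_sum, IExₗ_apply]
    _ = 0 := by rw [hsum, map_zero, Pi.zero_apply]

end Updating

theorem updating_preserves_exchangeability_general {nc nh : ℕ}
    (xc : Fin nc → X) (D : Set ((Fin (nc + nh) → X) → ℝ))
    (hcoh : Coherent D) (hexch : Exchangeable X (nc + nh) D) :
    Coherent {f : (Fin nh → X) → ℝ | IEx xc f ∈ D} ∧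
    Exchangeable X nh {f : (Fin nh → X) → ℝ | IEx xc f ∈ D} :=
  ⟨hcoh.preimage (IExₗ xc) (IEx_injective xc) fun _ => IEx_nonneg xc,
    hexch.preimage (IExₗ xc) fun _ => IEx_mem_WA xc⟩

theorem updating_preserves_exchangeability {nc nh : ℕ} (hnc : 1 ≤ nc) (hnh : 1 ≤ nh)
    (xc : Fin nc → X) (D : Set ((Fin (nc + nh) → X) → ℝ))
    (hcoh : Coherent D) (hexch : Exchangeable X (nc + nh) D) :
    Coherent {f : (Fin nh → X) → ℝ | IEx xc f ∈ D} ∧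
    Exchangeable X nh {f : (Fin nh → X) → ℝ | IEx xc f ∈ D} :=
  updating_preserves_exchangeability_general xc D hcoh hexch
end

section
/- Let 1 ≤ ň < N, n̂ := N − ň, and let x̌, y̌ ∈ X^ň have the same count vector, T^ň(x̌) = T^ň(y̌) =: m̌. Let D be a coherent and exchangeable set of gambles on X^N. For a gamble f on X^n̂ let I_{E_x̌}f denote the gamble on X^N = X^ň × X^n̂ mapping (z,y) to f(y) if z = x̌ and to 0 otherwise, and let I_{E_m̌}f map (z,y) to f(y) if T^ň(z) = m̌ and to 0 otherwise; set D⌋x̌ := {f ∈ G(X^n̂) : I_{E_x̌}f ∈ D} and D⌋m̌ := {f ∈ G(X^n̂) : I_{E_m̌}f ∈ D}. Then D⌋x̌ = D⌋y̌ = D⌋m̌. -/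
variable {X : Type*} [Fintype X] [DecidableEq X] [Nonempty X]

/-- The counting map `T^n`: `countVec x z` is the number of indices `k` with `x k = z`. -/
def countVec {X : Type*} [Fintype X] [DecidableEq X] {n : ℕ} (x : Fin n → X) : X → ℕ :=
  fun z => (Finset.univ.filter fun k => x k = z).card

/-- `I_{E_m̌} f`: the gamble on `X^(nc+nh)` equal to `f` on the last `nh` coordinates
when the count vector of the first `nc` coordinates is `m̌`, and `0` otherwise. -/
def IEm {X : Type*} [Fintype X] [DecidableEq X] {nc nh : ℕ} (mc : X → ℕ)
    (f : (Fin nh → X) → ℝ) : (Fin (nc + nh) → X) → ℝ :=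
  fun w => if countVec (firstPart w) = mc then f (lastPart w) else 0

/-
Averaging `I_{E_x̌} f` over the permutations of the first `ň` coordinates changes it only by an
element of `W_{A_N}`, and the average is a positive multiple of `I_{E_m̌} f`: the permutations `σ`
with `z ∘ σ = x̌` form a coset of the stabiliser of `x̌` when `T(z) = m̌` and are absent otherwise.
Exchangeability makes `D` invariant under adding elements of `W_{A_N}` and coherence under
positive scaling, so `I_{E_x̌} f ∈ D ↔ I_{E_m̌} f ∈ D`, and the right side depends on `x̌` only
through `m̌`.
-/

open Finset

noncomputable def exgLinear (X : Type*) (n : ℕ) :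
    ((Fin n → X) → ℝ) →ₗ[ℝ] ((Fin n → X) → ℝ) :=
  (n.factorial : ℝ)⁻¹ • ∑ π : Equiv.Perm (Fin n), LinearMap.funLeft ℝ ℝ (· ∘ ⇑π)

theorem exg_eq_exgLinear {X : Type*} {n : ℕ} (f : (Fin n → X) → ℝ) :
    exg n f = exgLinear X n f := by
  funext x
  simp [exg, exgLinear, LinearMap.funLeft, div_eq_inv_mul]

theorem exg_comp_perm {X : Type*} {n : ℕ} (f : (Fin n → X) → ℝ) (π : Equiv.Perm (Fin n)) :
    exg n (fun x => f (x ∘ ⇑π)) = exg n f := by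
  funext x
  simp only [exg]
  congr 1
  exact Fintype.sum_equiv (Equiv.mulRight π) _ _ fun _ => rfl

theorem exg_sum_comp_perm {X : Type*} {n : ℕ} {ι : Type*} (f : (Fin n → X) → ℝ)
    (s : Finset ι) (π : ι → Equiv.Perm (Fin n)) :
    exg n (∑ i ∈ s, fun x => f (x ∘ ⇑(π i))) = #s • exg n f := by
  rw [exg_eq_exgLinear, map_sum, ← sum_const]
  simp only [← exg_eq_exgLinear, exg_comp_perm]

theorem sub_mem_WA_iff {X : Type*} {n : ℕ} {f g : (Fin n → X) → ℝ} :
    f - g ∈ WA X n ↔ exg n f = exg n g := by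
  simp only [WA, Set.mem_ofPred_eq, exg_eq_exgLinear, map_sub, sub_eq_zero]

theorem Exchangeable.mem_iff_of_exg_eq {X : Type*} {n : ℕ} {D : Set ((Fin n → X) → ℝ)}
    (hD : Exchangeable X n D) {f g : (Fin n → X) → ℝ} (h : exg n f = exg n g) :
    f ∈ D ↔ g ∈ D :=
  ⟨fun hf => by simpa using hD _ (sub_mem_WA_iff.mpr h.symm) f hf,
    fun hg => by simpa using hD _ (sub_mem_WA_iff.mpr h) g hg⟩

theorem Coherent.smul_mem_iff {Y : Type*} {D : Set (Y → ℝ)} (hD : Coherent D) {c : ℝ}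
    (hc : 0 < c) {f : Y → ℝ} : c • f ∈ D ↔ f ∈ D := by
  refine ⟨fun h => ?_, fun h => hD.2.2.1 f h c hc⟩
  simpa [smul_smul, inv_mul_cancel₀ hc.ne'] using hD.2.2.1 _ h c⁻¹ (inv_pos.mpr hc)

section CountVec

variable {X : Type*} [Fintype X] [DecidableEq X] {n : ℕ}

theorem countVec_comp_perm (u : Fin n → X) (σ : Equiv.Perm (Fin n)) :
    countVec (u ∘ ⇑σ) = countVec u := by
  funext z
  exact card_equiv σ (by simp)

theorem exists_perm_comp_eq_of_countVec_eq {u v : Fin n → X} (h : countVec u = countVec v) :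
    ∃ τ : Equiv.Perm (Fin n), u ∘ ⇑τ = v := by
  have fibres : ∀ z : X, {k // v k = z} ≃ {k // u k = z} := fun z =>
    Fintype.equivOfCardEq <| by simpa [countVec, Fintype.card_subtype] using (congrFun h z).symm
  exact ⟨Equiv.ofFiberEquiv fibres, funext (Equiv.ofFiberEquiv_map fibres)⟩

theorem card_perm_comp_eq (u v : Fin n → X) :
    #{σ : Equiv.Perm (Fin n) | u ∘ ⇑σ = v} =
      if countVec u = countVec v then #{ρ : Equiv.Perm (Fin n) | v ∘ ⇑ρ = v} else 0 := by
  split_ifs with h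
  · obtain ⟨τ, hτ⟩ := exists_perm_comp_eq_of_countVec_eq h
    refine (card_equiv (Equiv.mulLeft τ) fun ρ => ?_).symm
    simp only [mem_filter, mem_univ, true_and, Equiv.coe_mulLeft,
      Equiv.Perm.coe_mul, ← hτ]
    rfl
  · refine card_eq_zero.mpr (filter_eq_empty_iff.mpr fun σ _ hσ => h ?_)
    rw [← hσ, countVec_comp_perm]

end CountVec

def permFirstPart {nc : ℕ} (nh : ℕ) (σ : Equiv.Perm (Fin nc)) : Equiv.Perm (Fin (nc + nh)) :=
  Equiv.permCongr finSumFinEquiv (σ.sumCongr (Equiv.refl (Fin nh)))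

section Blocks

variable {X : Type*} {nc nh : ℕ}

theorem firstPart_comp_permFirstPart (σ : Equiv.Perm (Fin nc)) (w : Fin (nc + nh) → X) :
    firstPart (w ∘ ⇑(permFirstPart nh σ)) = firstPart w ∘ ⇑σ := by
  funext i
  simp [firstPart, permFirstPart, Equiv.permCongr_apply]

theorem lastPart_comp_permFirstPart (σ : Equiv.Perm (Fin nc)) (w : Fin (nc + nh) → X) :
    lastPart (w ∘ ⇑(permFirstPart nh σ)) = lastPart w := by
  funext j
  simp [lastPart, permFirstPart, Equiv.permCongr_apply]

variable [Fintype X] [DecidableEq X]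

theorem sum_IEx_comp_permFirstPart (xc : Fin nc → X) (f : (Fin nh → X) → ℝ) :
    ∑ σ : Equiv.Perm (Fin nc), (fun w => IEx xc f (w ∘ ⇑(permFirstPart nh σ))) =
      (#{ρ : Equiv.Perm (Fin nc) | xc ∘ ⇑ρ = xc} : ℝ) • IEm (countVec xc) f := by
  funext w
  simp only [Finset.sum_apply, IEx, IEm, firstPart_comp_permFirstPart,
    lastPart_comp_permFirstPart, Pi.smul_apply, smul_eq_mul]
  rw [← sum_filter, sum_const, nsmul_eq_mul, card_perm_comp_eq]
  split_ifs <;> simp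

theorem exg_IEx (xc : Fin nc → X) (f : (Fin nh → X) → ℝ) :
    exg (nc + nh) (IEx xc f) =
      exg (nc + nh) (((#{ρ : Equiv.Perm (Fin nc) | xc ∘ ⇑ρ = xc} : ℝ) / nc.factorial) •
        IEm (countVec xc) f) := by
  have hfac : (nc.factorial : ℝ) ≠ 0 := by positivity
  have averaged := exg_sum_comp_perm (IEx xc f) (univ : Finset (Equiv.Perm (Fin nc)))
    (permFirstPart nh)
  rw [sum_IEx_comp_permFirstPart, card_univ, Fintype.card_perm, Fintype.card_fin,
    ← Nat.cast_smul_eq_nsmul ℝ] at averaged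
  rw [← smul_right_inj hfac, ← averaged, exg_eq_exgLinear, exg_eq_exgLinear, map_smul, map_smul,
    smul_smul, mul_div_cancel₀ _ hfac]

theorem IEx_mem_iff_IEm_mem {D : Set ((Fin (nc + nh) → X) → ℝ)} (hcoh : Coherent D)
    (hexch : Exchangeable X (nc + nh) D) (xc : Fin nc → X) (f : (Fin nh → X) → ℝ) :
    IEx xc f ∈ D ↔ IEm (countVec xc) f ∈ D := by
  have hstab : 0 < #{ρ : Equiv.Perm (Fin nc) | xc ∘ ⇑ρ = xc} :=
    card_pos.mpr ⟨1, by simp⟩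
  rw [hexch.mem_iff_of_exg_eq (exg_IEx xc f), hcoh.smul_mem_iff (by positivity)]

end Blocks

theorem sufficiency_of_observed_count_vectors_general {nc nh : ℕ}
    (xc yc : Fin nc → X) (hxy : countVec xc = countVec yc)
    (D : Set ((Fin (nc + nh) → X) → ℝ))
    (hcoh : Coherent D) (hexch : Exchangeable X (nc + nh) D) :
    {f : (Fin nh → X) → ℝ | IEx xc f ∈ D} = {f : (Fin nh → X) → ℝ | IEx yc f ∈ D} ∧
    {f : (Fin nh → X) → ℝ | IEx xc f ∈ D} =
      {f : (Fin nh → X) → ℝ | IEm (countVec xc) f ∈ D} := by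
  have hx := IEx_mem_iff_IEm_mem hcoh hexch xc
  have hy := IEx_mem_iff_IEm_mem hcoh hexch yc
  refine ⟨Set.ext fun f => ?_, Set.ext fun f => hx f⟩
  simp only [Set.mem_ofPred_eq, hx, hy, hxy]

theorem sufficiency_of_observed_count_vectors {nc nh : ℕ} (hnc : 1 ≤ nc) (hnh : 1 ≤ nh)
    (xc yc : Fin nc → X) (hxy : countVec xc = countVec yc)
    (D : Set ((Fin (nc + nh) → X) → ℝ))
    (hcoh : Coherent D) (hexch : Exchangeable X (nc + nh) D) :
    {f : (Fin nh → X) → ℝ | IEx xc f ∈ D} = {f : (Fin nh → X) → ℝ | IEx yc f ∈ D} ∧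
    {f : (Fin nh → X) → ℝ | IEx xc f ∈ D} =
      {f : (Fin nh → X) → ℝ | IEm (countVec xc) f ∈ D} :=
  sufficiency_of_observed_count_vectors_general xc yc hxy D hcoh hexch
end
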